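/- arXiv:2409.13617 — 3 statements merged into one kernel-verified Lean document; each statement's English description precedes it below -/
import Mathlib

section
/- The weight of an arc is additive under tensor products: if ρ is a K-point of an algebraic group G acting linearly on vector spaces V, V', W, W', and v ∈ V, v' ∈ V', w ∈ W, w' ∈ W' are nonzero, then ν(ρ,[v⊗v', w⊗w']) = ν(ρ,[v,w]) + ν(ρ,[v',w']), where for a pair the weight is defined as ν(ρ,[v,w]) = min over nonzero coordinates of the order of vanishing (z-adic valuation) of the W-coordinates of ρ.(v,w) minus the min over nonzero coordinates of the order of vanishing of the V-coordinates. -/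
/-- `K = ℂ((z))`, the field of formal Laurent series. -/
abbrev K : Type := LaurentSeries ℂ

/-- The minimal `z`-adic valuation (order of vanishing) among the nonzero
coordinates of a tuple of Laurent series. -/
noncomputable def minOrd {ι : Type*} (a : ι → K) : ℤ :=
  sInf {m : ℤ | ∃ i, a i ≠ 0 ∧ (a i).order = m}

/-- The weight `ν(ρ,[v,w])` of an arc on a pair, computed from the `K`-coordinate
tuples `a` of `ρ.v` and `b` of `ρ.w`:
`ν = min_{j, b j ≠ 0} ord₀(b j) − min_{i, a i ≠ 0} ord₀(a i)`. -/
noncomputable def wt {ι κ : Type*} (a : ι → K) (b : κ → K) : ℤ :=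
  minOrd b - minOrd a

/-- Base change of a coordinate tuple of a complex vector to `K`. -/
noncomputable def toK {ι : Type*} (v : ι → ℂ) : ι → K :=
  fun i => algebraMap ℂ K (v i)

lemma key_ne {α : Type*} (f : α → ℂ) (hf : f ≠ 0) (e : (α → K) ≃ₗ[K] (α → K)) :
    ∃ i, e (toK f) i ≠ 0 := by
  have h0 : toK f ≠ 0 := by
    intro h
    apply hf
    funext i
    have := congrFun h i
    simpa [toK, map_eq_zero] using this
  have : e (toK f) ≠ 0 := fun h => h0 (e.injective (by simpa using h))
  exact Function.ne_iff.mp this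

lemma ordSet_bddBelow {ι : Type*} [Fintype ι] (a : ι → K) :
    BddBelow {m : ℤ | ∃ i, a i ≠ 0 ∧ (a i).order = m} := by
  apply Set.Finite.bddBelow
  apply Set.Finite.subset (Set.finite_range fun i => (a i).order)
  rintro m ⟨i, -, rfl⟩; exact ⟨i, rfl⟩

lemma minOrd_mem {ι : Type*} [Fintype ι] {a : ι → K} (h : ∃ i, a i ≠ 0) :
    ∃ i, a i ≠ 0 ∧ (a i).order = minOrd a := by
  obtain ⟨i, hi⟩ := h
  have := Int.csInf_mem (s := {m : ℤ | ∃ i, a i ≠ 0 ∧ (a i).order = m})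
    ⟨_, ⟨i, hi, rfl⟩⟩ (ordSet_bddBelow a)
  exact this

lemma minOrd_le {ι : Type*} [Fintype ι] {a : ι → K} {i : ι} (hi : a i ≠ 0) :
    minOrd a ≤ (a i).order :=
  csInf_le (ordSet_bddBelow a) ⟨i, hi, rfl⟩

lemma minOrd_mul {ι κ : Type*} [Fintype ι] [Fintype κ] {a : ι → K} {b : κ → K}
    (ha : ∃ i, a i ≠ 0) (hb : ∃ j, b j ≠ 0) :
    minOrd (fun p : ι × κ => a p.1 * b p.2) = minOrd a + minOrd b := by
  apply le_antisymm
  · obtain ⟨i, hi, hio⟩ := minOrd_mem ha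
    obtain ⟨j, hj, hjo⟩ := minOrd_mem hb
    have h := minOrd_le (a := fun p : ι × κ => a p.1 * b p.2) (i := (i, j))
      (mul_ne_zero hi hj)
    calc minOrd (fun p : ι × κ => a p.1 * b p.2) ≤ (a i * b j).order := h
      _ = minOrd a + minOrd b := by rw [HahnSeries.order_mul hi hj, hio, hjo]
  · obtain ⟨⟨i, j⟩, hp, hpo⟩ := minOrd_mem (a := fun p : ι × κ => a p.1 * b p.2)
      ⟨(ha.choose, hb.choose), mul_ne_zero ha.choose_spec hb.choose_spec⟩
    have hi : a i ≠ 0 := left_ne_zero_of_mul hp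
    have hj : b j ≠ 0 := right_ne_zero_of_mul hp
    calc minOrd a + minOrd b ≤ (a i).order + (b j).order :=
          add_le_add (minOrd_le hi) (minOrd_le hj)
      _ = _ := by rw [← HahnSeries.order_mul hi hj]; exact hpo

/-- Additivity of the weight of an arc under tensor products.
The arc `ρ ∈ G(K)` acts on the base changes `V_K = ι → K`, `V'_K`, `W_K`, `W'_K`
through `K`-linear automorphisms `ρV, ρV', ρW, ρW'` (the images of `ρ` under the
four representations of `G`), and on tensor products diagonally, so that the
coordinates of `ρ.(v ⊗ v')` in a tensor basis are the products of the coordinates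
of `ρ.v` and `ρ.v'`.  Then `ν(ρ,[v⊗v', w⊗w']) = ν(ρ,[v,w]) + ν(ρ,[v',w'])`. -/
theorem weight_tensor_additive {ι ι' κ κ' : Type*}
    [Fintype ι] [Fintype ι'] [Fintype κ] [Fintype κ']
    (ρV : (ι → K) ≃ₗ[K] (ι → K)) (ρV' : (ι' → K) ≃ₗ[K] (ι' → K))
    (ρW : (κ → K) ≃ₗ[K] (κ → K)) (ρW' : (κ' → K) ≃ₗ[K] (κ' → K))
    (v : ι → ℂ) (v' : ι' → ℂ) (w : κ → ℂ) (w' : κ' → ℂ)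
    (hv : v ≠ 0) (hv' : v' ≠ 0) (hw : w ≠ 0) (hw' : w' ≠ 0) :
    wt (fun p : ι × ι' => ρV (toK v) p.1 * ρV' (toK v') p.2)
       (fun p : κ × κ' => ρW (toK w) p.1 * ρW' (toK w') p.2)
      = wt (ρV (toK v)) (ρW (toK w)) + wt (ρV' (toK v')) (ρW' (toK w')) := by
  have ha := key_ne v hv ρV
  have ha' := key_ne v' hv' ρV'
  have hb := key_ne w hw ρW
  have hb' := key_ne w' hw' ρW'
  simp only [wt, minOrd_mul ha ha', minOrd_mul hb hb']
  ring
end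

section
/- Slope formula for the log norm functional along an arc: let V, W be finite-dimensional Hermitian complex vector spaces, G a linear algebraic group acting linearly on V and W, ρ an arc in G extending to a map z ↦ ρ(z) ∈ G on a punctured disc whose matrix entries are convergent Laurent series, and v ∈ V, w ∈ W nonzero. Define f(g) = log|g.v| − log|g.w|. Then f(ρ(z)) = ν(ρ,[v,w])·log|z|⁻¹ + O(1) as z → 0. -/
/-!
Factor out `z ^ m`, with `m` the smallest exponent, from every nonvanishing coordinate: for
`z ≠ 0` this gives `Σ ‖a i z‖² = ‖z‖^(2m) · B z`, where `B z = Σ ‖z ^ (n i - m) * g i z‖²` is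
continuous at `0` (all exponents `n i - m` are nonnegative) and `B 0 > 0` (a coordinate
attaining the minimum contributes `‖g i 0‖²`). Hence `log √(Σ ‖a i z‖²) = m log ‖z‖ + log √(B z)`
with the last term bounded near `0`; subtracting the two sides gives the slope `ν`.
-/

open Filter Topology Asymptotics

section LeadingExponent

variable {𝕜 ι : Type*} [NormedField 𝕜] {S : Finset ι} {n : ι → ℤ} {g : ι → 𝕜 → 𝕜}

lemma sum_norm_zpow_mul_sq_eq (m : ℤ) {z : 𝕜} (hz : z ≠ 0) :
    ∑ i ∈ S, ‖z ^ n i * g i z‖ ^ 2 = (‖z‖ ^ m) ^ 2 * ∑ i ∈ S, ‖z ^ (n i - m) * g i z‖ ^ 2 := by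
  rw [Finset.mul_sum]
  refine Finset.sum_congr rfl fun i _ => ?_
  rw [← add_sub_cancel m (n i), zpow_add₀ hz, add_sub_cancel_left, norm_mul, norm_mul, norm_mul,
    norm_zpow]
  ring

lemma continuousAt_sum_norm_zpow_sub_mul_sq {m : ℤ} (hm : ∀ i ∈ S, m ≤ n i)
    (hg : ∀ i ∈ S, ContinuousAt (g i) 0) :
    ContinuousAt (fun z => ∑ i ∈ S, ‖z ^ (n i - m) * g i z‖ ^ 2) 0 :=
  tendsto_finsetSum S fun i hi =>
    ((continuousAt_zpow₀ _ _ (Or.inr (sub_nonneg.2 (hm i hi)))).mul (hg i hi)).norm.pow 2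

lemma sum_norm_zpow_sub_inf'_mul_sq_pos (hS : S.Nonempty) (hg0 : ∀ i ∈ S, g i 0 ≠ 0) :
    0 < ∑ i ∈ S, ‖(0 : 𝕜) ^ (n i - S.inf' hS n) * g i 0‖ ^ 2 := by
  obtain ⟨i₀, hi₀, hmin⟩ := Finset.exists_mem_eq_inf' hS n
  refine Finset.sum_pos' (fun i _ => sq_nonneg _) ⟨i₀, hi₀, ?_⟩
  rw [← hmin, sub_self, zpow_zero, one_mul]
  exact pow_pos (norm_pos_iff.2 (hg0 i₀ hi₀)) 2

theorem isBigO_log_sqrt_sum_norm_sq_sub_inf'_mul_log [Fintype ι] {a : ι → 𝕜 → 𝕜}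
    (hS : S.Nonempty) (hg : ∀ i ∈ S, ContinuousAt (g i) 0) (hg0 : ∀ i ∈ S, g i 0 ≠ 0)
    (ha : ∀ i ∈ S, ∀ z, a i z = z ^ n i * g i z) (ha0 : ∀ i ∉ S, ∀ z, a i z = 0) :
    (fun z => Real.log √(∑ i, ‖a i z‖ ^ 2) - S.inf' hS n * Real.log ‖z‖)
      =O[𝓝[≠] 0] (fun _ => (1 : ℝ)) := by
  set m := S.inf' hS n
  set B := fun z => ∑ i ∈ S, ‖z ^ (n i - m) * g i z‖ ^ 2
  have hB : ContinuousAt B 0 :=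
    continuousAt_sum_norm_zpow_sub_mul_sq (fun i hi => Finset.inf'_le n hi) hg
  have hB0 : 0 < B 0 := sum_norm_zpow_sub_inf'_mul_sq_pos hS hg0
  have hsum : ∀ z, ∑ i, ‖a i z‖ ^ 2 = ∑ i ∈ S, ‖z ^ n i * g i z‖ ^ 2 := fun z => by
    rw [← Finset.sum_subset S.subset_univ fun i _ hi => by rw [ha0 i hi z, norm_zero, sq, zero_mul]]
    exact Finset.sum_congr rfl fun i hi => by rw [ha i hi z]
  have hlogB : Tendsto (fun z => Real.log √(B z)) (𝓝[≠] 0) (𝓝 (Real.log √(B 0))) :=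
    (hB.sqrt.log (Real.sqrt_pos.2 hB0).ne').tendsto.mono_left nhdsWithin_le_nhds
  refine (hlogB.isBigO_one ℝ).congr' ?_ EventuallyEq.rfl
  filter_upwards [self_mem_nhdsWithin, nhdsWithin_le_nhds (hB.eventually (lt_mem_nhds hB0))]
    with z (hz : z ≠ 0) hBz
  have hzm : 0 < ‖z‖ ^ m := zpow_pos (norm_pos_iff.2 hz) m
  rw [hsum, sum_norm_zpow_mul_sq_eq m hz, Real.sqrt_mul (sq_nonneg _), Real.sqrt_sq hzm.le,
    Real.log_mul hzm.ne' (Real.sqrt_pos.2 hBz).ne', Real.log_zpow]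
  ring

end LeadingExponent

/-- `a i z` and `b j z` are the coordinates of `ρ(z).v` and `ρ(z).w` in orthonormal bases of `V`
and `W`; `Sa` and `Sb` index the coordinates that do not vanish identically. -/
theorem log_norm_slope_formula {p q : ℕ}
    (a : Fin p → ℂ → ℂ) (b : Fin q → ℂ → ℂ)
    (na : Fin p → ℤ) (nb : Fin q → ℤ)
    (ga : Fin p → ℂ → ℂ) (gb : Fin q → ℂ → ℂ)
    (Sa : Finset (Fin p)) (Sb : Finset (Fin q))
    (hSa : Sa.Nonempty) (hSb : Sb.Nonempty)
    (hga : ∀ i ∈ Sa, AnalyticAt ℂ (ga i) 0 ∧ ga i 0 ≠ 0 ∧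
      ∀ z, a i z = z ^ (na i) * ga i z)
    (ha0 : ∀ i ∉ Sa, ∀ z, a i z = 0)
    (hgb : ∀ j ∈ Sb, AnalyticAt ℂ (gb j) 0 ∧ gb j 0 ≠ 0 ∧
      ∀ z, b j z = z ^ (nb j) * gb j z)
    (hb0 : ∀ j ∉ Sb, ∀ z, b j z = 0)
    (ν : ℤ) (hν : ν = Sb.inf' hSb nb - Sa.inf' hSa na) :
    ∃ C : ℝ, ∀ᶠ z in nhdsWithin (0 : ℂ) {0}ᶜ,
      |(Real.log (Real.sqrt (∑ i, ‖a i z‖ ^ 2))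
          - Real.log (Real.sqrt (∑ j, ‖b j z‖ ^ 2)))
        - (ν : ℝ) * Real.log (‖z‖⁻¹)| ≤ C := by
  have hA := isBigO_log_sqrt_sum_norm_sq_sub_inf'_mul_log hSa
    (fun i hi => (hga i hi).1.continuousAt) (fun i hi => (hga i hi).2.1)
    (fun i hi => (hga i hi).2.2) ha0
  have hB := isBigO_log_sqrt_sum_norm_sq_sub_inf'_mul_log hSb
    (fun j hj => (hgb j hj).1.continuousAt) (fun j hj => (hgb j hj).2.1)
    (fun j hj => (hgb j hj).2.2) hb0
  obtain ⟨C, hC⟩ := (isBigO_one_iff ℝ).1 (hA.sub hB)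
  refine ⟨C, ?_⟩
  filter_upwards [hC] with z (hz : ‖_‖ ≤ C)
  refine Eq.trans_le ?_ hz
  rw [Real.norm_eq_abs, Real.log_inv, hν]
  push_cast
  ring_nf
end

section
/- Specialisation criterion: let ρ be an arc in G and [v,w] ∈ ℙ(V⊕W) with v,w ≠ 0. The specialisation of ρ.[v,w] (the image of the closed point under the R-point of ℙ(V⊕W) extending ρ.[v,w] via the valuative criterion) lies in ℙ(0⊕W) if and only if ν(ρ,[v,w]) < 0. -/
/-!
With `μ = min (minOrd a) (minOrd b)` the `V`-coordinates of the specialisation are the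
`μ`-th coefficients of the `a i`. They all vanish iff `μ` lies strictly below every order of
the `a i`, i.e. iff the minimum is attained only on the `W` side: `minOrd b < minOrd a`.
-/

section minOrd

variable {ι κ : Type*} [Finite ι] [Finite κ]

lemma bddBelow_minOrd_set (a : ι → K) :
    BddBelow {m : ℤ | ∃ i, a i ≠ 0 ∧ (a i).order = m} := by
  have hfin : {m : ℤ | ∃ i, a i ≠ 0 ∧ (a i).order = m}.Finite :=
    (Set.finite_range fun i => (a i).order).subset fun _ ⟨i, _, hi⟩ => ⟨i, hi⟩
  exact hfin.bddBelow

lemma minOrd_le_order (a : ι → K) {i : ι} (hi : a i ≠ 0) : minOrd a ≤ (a i).order :=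
  csInf_le (bddBelow_minOrd_set a) ⟨i, hi, rfl⟩

lemma exists_order_eq_minOrd (a : ι → K) (ha : ∃ i, a i ≠ 0) :
    ∃ i, a i ≠ 0 ∧ (a i).order = minOrd a := by
  obtain ⟨i, hi⟩ := ha
  exact Int.csInf_mem (s := {m : ℤ | ∃ i, a i ≠ 0 ∧ (a i).order = m}) ⟨_, i, hi, rfl⟩
    (bddBelow_minOrd_set a)

lemma minOrd_sumElim (a : ι → K) (b : κ → K) (ha : ∃ i, a i ≠ 0) (hb : ∃ j, b j ≠ 0) :
    minOrd (Sum.elim a b) = min (minOrd a) (minOrd b) := by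
  obtain ⟨i, hi⟩ := ha
  obtain ⟨j, hj⟩ := hb
  have hunion : {m : ℤ | ∃ s, Sum.elim a b s ≠ 0 ∧ (Sum.elim a b s).order = m} =
      {m | ∃ i, a i ≠ 0 ∧ (a i).order = m} ∪ {m | ∃ j, b j ≠ 0 ∧ (b j).order = m} := by
    ext m
    simp only [Sum.exists, Sum.elim_inl, Sum.elim_inr, Set.mem_ofPred_eq, Set.mem_union]
  rw [minOrd, hunion, csInf_union (bddBelow_minOrd_set a) ⟨_, i, hi, rfl⟩
    (bddBelow_minOrd_set b) ⟨_, j, hj, rfl⟩, minOrd, minOrd]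

lemma forall_coeff_eq_zero_iff_lt_minOrd (a : ι → K) (ha : ∃ i, a i ≠ 0) {μ : ℤ}
    (hμ : μ ≤ minOrd a) : (∀ i, (a i).coeff μ = 0) ↔ μ < minOrd a := by
  refine ⟨fun hzero => hμ.lt_of_ne fun hμa => ?_, fun hlt i => ?_⟩
  · obtain ⟨i, hi, hord⟩ := exists_order_eq_minOrd a ha
    exact hi (HahnSeries.coeff_order_eq_zero.mp (hord ▸ hμa ▸ hzero i))
  · by_cases hi : a i = 0
    · simp [hi]
    · exact HahnSeries.coeff_eq_zero_of_lt_order (hlt.trans_le (minOrd_le_order a hi))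

end minOrd

/-- Specialisation criterion.  Let `a`, `b` be the (not
identically zero) homogeneous `K`-coordinate tuples of `ρ.[v,w]` in `V` and `W`
respectively.  The `R = ℂ[[z]]`-point of `ℙ(V⊕W)` extending `ρ.[v,w]` by the
valuative criterion is represented by clearing poles: with
`μ = min ord₀` over all coordinates, the specialisation (image of the closed
point of `Spec R`) has homogeneous coordinates `spec s = coeff_μ` of the
corresponding coordinate.  The specialisation lies in `ℙ(0⊕W)` — i.e. all of
its `V`-coordinates vanish — if and only if `ν(ρ,[v,w]) < 0`. -/
theorem specialisation_criterion {ι κ : Type*} [Fintype ι] [Fintype κ]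
    (a : ι → K) (b : κ → K)
    (ha : ∃ i, a i ≠ 0) (hb : ∃ j, b j ≠ 0)
    (μ : ℤ) (hμ : μ = minOrd (Sum.elim a b))
    (spec : ι ⊕ κ → ℂ) (hspec : ∀ s, spec s = (Sum.elim a b s).coeff μ) :
    (∀ i, spec (Sum.inl i) = 0) ↔ wt a b < 0 := by
  rw [minOrd_sumElim a b ha hb] at hμ
  simp only [hspec, Sum.elim_inl]
  rw [forall_coeff_eq_zero_iff_lt_minOrd a ha (hμ ▸ min_le_left _ _), hμ, wt]
  omega
end
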